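/- Let (X,{f_i}_{i∈I}) be an l_θP-space and let Y be a closed and open subset of X. Then the following are equivalent: (i) Y is a θ-subset of X; (ii) Y is semimodal; (iii) Y is modal. -/
import Mathlib


/-- The axioms of an `l_θP`-space except the density axiom (lP6):
`X` is assumed to be a Priestley space (via `[CompactSpace X]` and
`[PriestleySpace X]`), each `f i` is continuous, `x ≤ y` implies `f i x = f i y`,
`i ≤ j` implies `f i x ≤ f j x`, and `f i ∘ f j = f i`. -/
structure IsLPSpaceAux {I X : Type*} [LinearOrder I] [PartialOrder X] [TopologicalSpace X]
    (f : I → X → X) : Prop where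
  continuous : ∀ i, Continuous (f i)
  eq_of_le : ∀ (i : I) ⦃x y : X⦄, x ≤ y → f i x = f i y
  mono : ∀ ⦃i j : I⦄, i ≤ j → ∀ x, f i x ≤ f j x
  comp : ∀ i j x, f i (f j x) = f i x

/-- An `l_θP`-space: the above axioms together with density of `⋃ i, f i (X)`. -/
structure IsLPSpace {I X : Type*} [LinearOrder I] [PartialOrder X] [TopologicalSpace X]
    (f : I → X → X) extends IsLPSpaceAux f : Prop where
  dense : Dense (⋃ i, Set.range (f i))

/-- `Y` is semimodal if `f i '' Y ⊆ Y` for all `i`. -/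
def Semimodal {I X : Type*} (f : I → X → X) (Y : Set X) : Prop := ∀ i, f i '' Y ⊆ Y

/-- `Y` is modal if `f i ⁻¹' Y = Y` for all `i`. -/
def Modal {I X : Type*} (f : I → X → X) (Y : Set X) : Prop := ∀ i, f i ⁻¹' Y = Y

/-- `Y` is a θ-subset if `⋃ i, f i '' Y ⊆ Y ⊆ closure (⋃ i, f i '' Y)`. -/
def ThetaSubset {I X : Type*} [TopologicalSpace X] (f : I → X → X) (Y : Set X) : Prop :=
  (⋃ i, f i '' Y) ⊆ Y ∧ Y ⊆ closure (⋃ i, f i '' Y)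


/-- for a closed and open subset of an l_θP-space: θ-subset, semimodal and
modal are equivalent. -/
theorem stmt13 {I X : Type*} [LinearOrder I] [PartialOrder X] [TopologicalSpace X]
    [CompactSpace X] [PriestleySpace X] (f : I → X → X) (hf : IsLPSpace f)
    (Y : Set X) (hYc : IsClosed Y) (hYo : IsOpen Y) :
    List.TFAE [ ThetaSubset f Y, Semimodal f Y, Modal f Y ] := by
  have h21 : Semimodal f Y → Modal f Y := by
    intro hs i
    ext x
    constructor
    · intro hx
      by_contra hxY
      have hU : IsOpen ((f i ⁻¹' Y) ∩ Yᶜ) :=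
        (hYo.preimage (hf.continuous i)).inter hYc.isOpen_compl
      have hne : ((f i ⁻¹' Y) ∩ Yᶜ).Nonempty := ⟨x, hx, hxY⟩
      obtain ⟨p, hpU, hpD⟩ := hf.dense.inter_open_nonempty _ hU hne
      obtain ⟨_, ⟨j, rfl⟩, z, rfl⟩ := hpD
      have h1 : f i z ∈ Y := by
        have := hpU.1
        rwa [Set.mem_preimage, hf.comp i j z] at this
      have h2 : f j (f i z) ∈ Y := hs j ⟨f i z, h1, rfl⟩
      rw [hf.comp j i z] at h2
      exact hpU.2 h2
    · intro hx
      exact hs i ⟨x, hx, rfl⟩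
  have h12 : ThetaSubset f Y → Semimodal f Y := by
    intro h i x hx
    exact h.1 (Set.mem_iUnion.2 ⟨i, hx⟩)
  have h31 : Modal f Y → ThetaSubset f Y := by
    intro hm
    have hs : Semimodal f Y := by intro i x ⟨y, hy, hxy⟩; subst hxy; rw [← hm i] at hy; exact hy
    constructor
    · intro x hx
      obtain ⟨_, ⟨i, rfl⟩, hx⟩ := hx
      exact hs i hx
    · intro y hy
      rw [mem_closure_iff]
      intro U hU hyU
      have hne : (U ∩ Y).Nonempty := ⟨y, hyU, hy⟩
      obtain ⟨p, hpU, hpD⟩ := hf.dense.inter_open_nonempty _ (hU.inter hYo) hne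
      obtain ⟨_, ⟨j, rfl⟩, z, rfl⟩ := hpD
      refine ⟨f j z, hpU.1, Set.mem_iUnion.2 ⟨j, f j z, hpU.2, ?_⟩⟩
      exact hf.comp j j z
  tfae_have 1 → 2 := h12
  tfae_have 2 → 3 := h21
  tfae_have 3 → 1 := h31
  tfae_finish
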